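/- arXiv:1907.11535 — 3 statements merged into one kernel-verified Lean document; each statement's English description precedes it below -/
import Mathlib

section
/- Let u be a classical solution of problem (B) on [-1,1]×[0,T] with initial data u0 satisfying u0(x) ≥ 1 for all x ∈ [-1,1]. Then for all x ∈ [-1,1] and t ∈ [0,T]: u(x,t) ≥ φ(x;1) + (π/4)·t + 1 − φ(1;1), where φ(x;1) := −(4/π)·ln(cos(πx/4)). In particular u(x,t) ≥ (π/4)·t − C1 with C1 := φ(1;1) − 1 = (2/π)·ln 2 − 1. -/
open Real

/-- Partial derivative in `x` of a function `u(x,t)`. -/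
noncomputable def ux (u : ℝ → ℝ → ℝ) (x t : ℝ) : ℝ := deriv (fun y => u y t) x

/-- Second partial derivative in `x` of a function `u(x,t)`. -/
noncomputable def uxx (u : ℝ → ℝ → ℝ) (x t : ℝ) : ℝ := deriv (fun y => ux u y t) x

/-- Partial derivative in `t` of a function `u(x,t)`. -/
noncomputable def ut (u : ℝ → ℝ → ℝ) (x t : ℝ) : ℝ := deriv (fun s => u x s) t

/-- A classical solution of problem (B) on `[-1,1] × [0,T]` with initial data `u0`:
`u` and `u_x` are continuous on the closed rectangle, `u` is `C^{2,1}` in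
`(-1,1) × (0,T]` where it satisfies `u_t = u_xx/(1+u_x²)`, with boundary
conditions `u_x(±1,t) = ±u(±1,t)` and initial condition `u(·,0) = u0`. -/
def IsClassicalSolB (u : ℝ → ℝ → ℝ) (u0 : ℝ → ℝ) (T : ℝ) : Prop :=
  ContinuousOn (fun p : ℝ × ℝ => u p.1 p.2) (Set.Icc (-1 : ℝ) 1 ×ˢ Set.Icc (0 : ℝ) T) ∧
  ContinuousOn (fun p : ℝ × ℝ => ux u p.1 p.2) (Set.Icc (-1 : ℝ) 1 ×ˢ Set.Icc (0 : ℝ) T) ∧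
  (∀ t ∈ Set.Ioc (0 : ℝ) T, ∀ x ∈ Set.Ioo (-1 : ℝ) 1,
    DifferentiableAt ℝ (fun y => u y t) x ∧
    DifferentiableAt ℝ (fun y => ux u y t) x ∧
    DifferentiableAt ℝ (fun s => u x s) t ∧
    ut u x t = uxx u x t / (1 + ux u x t ^ 2)) ∧
  (∀ t ∈ Set.Ioc (0 : ℝ) T, ux u 1 t = u 1 t ∧ ux u (-1) t = - u (-1) t) ∧
  (∀ x ∈ Set.Icc (-1 : ℝ) 1, u x 0 = u0 x)

/-!
For `ε > 0` the function `w_ε(x,t) = φ(x;1) + (π/4 - ε) t + 1 - φ(1;1)` is a strict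
subsolution of (B): `φ'' = (π/4) (1 + φ'²)`, `w_ε(·,0) ≤ 1 ≤ u₀`, and on the lateral
boundary `∂ₓw_ε(±1,t) = ±1` while `w_ε(±1,t) - 1 = (π/4 - ε) t > 0`. We show `u ≥ w_ε` by a
minimum principle for `W = (u - w_ε) (3 - x²) e^{-6t}` on `[-1,1] × [0,T]` and let `ε → 0`.

The weight `ψ = 3 - x²` has `ψ'/ψ = ∓1` at `x = ±1`, so the Robin conditions `u_x = ±u` give
`∂ₓ[(u - w_ε) ψ] = ±2 (w_ε - 1)` there, and `W` cannot attain its minimum on the lateral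
boundary. At an interior minimum the first- and second-derivative tests in `x`, the one-sided
test in `t` and the equation force `u ≥ w_ε`; the factor `e^{-6t}` absorbs the zeroth-order
terms produced by the weight.
-/

open Set Filter Topology

section OneSided

variable {f f' : ℝ → ℝ} {s : Set ℝ} {a b L : ℝ}

lemma IsLocalMinOn.hasDerivWithinAt_nonpos (h : IsLocalMinOn f s b)
    (hf : HasDerivWithinAt f L s b) (hab : a < b) (hs : Icc a b ⊆ s) : L ≤ 0 := by
  have hseg : segment ℝ b a ⊆ s := by rwa [segment_symm, segment_eq_Icc hab.le]
  have := h.hasFDerivWithinAt_nonneg hf.hasFDerivWithinAt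
    (sub_mem_posTangentConeAt_of_segment_subset hseg)
  rw [ContinuousLinearMap.toSpanSingleton_apply, smul_eq_mul] at this
  nlinarith

lemma IsLocalMinOn.hasDerivWithinAt_nonneg (h : IsLocalMinOn f s a)
    (hf : HasDerivWithinAt f L s a) (hab : a < b) (hs : Icc a b ⊆ s) : 0 ≤ L := by
  have hseg : segment ℝ a b ⊆ s := by rwa [segment_eq_Icc hab.le]
  have := h.hasFDerivWithinAt_nonneg hf.hasFDerivWithinAt
    (sub_mem_posTangentConeAt_of_segment_subset hseg)
  rw [ContinuousLinearMap.toSpanSingleton_apply, smul_eq_mul] at this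
  nlinarith

lemma hasDerivWithinAt_Icc_right_of_continuousWithinAt (hab : a < b)
    (hf : ContinuousOn f (Icc a b)) (hd : ∀ x ∈ Ioo a b, HasDerivAt f (f' x) x)
    (hf' : ContinuousWithinAt f' (Icc a b) b) : HasDerivWithinAt f (f' b) (Icc a b) b := by
  have hlim : Tendsto (deriv f) (𝓝[<] b) (𝓝 (f' b)) := by
    refine (hf'.mono_of_mem_nhdsWithin (Icc_mem_nhdsLT hab)).tendsto.congr' ?_
    filter_upwards [Ioo_mem_nhdsLT hab] with x hx using (hd x hx).deriv.symm
  refine (hasDerivWithinAt_Iic_of_tendsto_deriv (s := Ioo a b)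
    (fun x hx => (hd x hx).differentiableAt.differentiableWithinAt)
    ((hf b (right_mem_Icc.2 hab.le)).mono Ioo_subset_Icc_self) (Ioo_mem_nhdsLT hab) hlim).mono
    Icc_subset_Iic_self

lemma hasDerivWithinAt_Icc_left_of_continuousWithinAt (hab : a < b)
    (hf : ContinuousOn f (Icc a b)) (hd : ∀ x ∈ Ioo a b, HasDerivAt f (f' x) x)
    (hf' : ContinuousWithinAt f' (Icc a b) a) : HasDerivWithinAt f (f' a) (Icc a b) a := by
  have hlim : Tendsto (deriv f) (𝓝[>] a) (𝓝 (f' a)) := by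
    refine (hf'.mono_of_mem_nhdsWithin (Icc_mem_nhdsGT hab)).tendsto.congr' ?_
    filter_upwards [Ioo_mem_nhdsGT hab] with x hx using (hd x hx).deriv.symm
  refine (hasDerivWithinAt_Ici_of_tendsto_deriv (s := Ioo a b)
    (fun x hx => (hd x hx).differentiableAt.differentiableWithinAt)
    ((hf a (left_mem_Icc.2 hab.le)).mono Ioo_subset_Icc_self) (Ioo_mem_nhdsGT hab) hlim).mono
    Icc_subset_Ici_self

end OneSided

lemma IsLocalMin.deriv_deriv_nonneg {f : ℝ → ℝ} {x₀ : ℝ} (h : IsLocalMin f x₀)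
    (hc : ContinuousAt f x₀) : 0 ≤ deriv (deriv f) x₀ := by
  by_contra! hneg
  have hmax := isLocalMax_of_deriv_deriv_neg hneg h.deriv_eq_zero hc
  have hconst : f =ᶠ[𝓝 x₀] fun _ => f x₀ := by
    filter_upwards [h, hmax] with x hmin hmax using le_antisymm hmax hmin
  have : deriv (deriv f) x₀ = 0 := by
    rw [hconst.deriv.deriv_eq]
    simp
  exact hneg.ne this

/-- `phi c` is the profile `φ(·;h)` of the problem, with `c = c(h) = arctan h`. -/
noncomputable def phi (c x : ℝ) : ℝ := -(1 / c) * log (cos (c * x))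

section Phi

variable {c x : ℝ}

lemma cos_mul_pos (hc : 0 ≤ c) (hc' : c < π / 2) (hx : x ∈ Icc (-1 : ℝ) 1) :
    0 < cos (c * x) := by
  apply cos_pos_of_mem_Ioo
  constructor <;> nlinarith [hx.1, hx.2]

lemma hasDerivAt_phi (hc : c ≠ 0) (hcos : cos (c * x) ≠ 0) :
    HasDerivAt (phi c) (tan (c * x)) x := by
  have h := (((hasDerivAt_id x).const_mul c).cos.log hcos).const_mul (-(1 / c))
  refine h.congr_deriv ?_
  simp only [id, tan_eq_sin_div_cos]
  field_simp

lemma hasDerivAt_tan_mul (hcos : cos (c * x) ≠ 0) :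
    HasDerivAt (fun y => tan (c * y)) (c * (1 + tan (c * x) ^ 2)) x := by
  have h := (hasDerivAt_tan hcos).comp x ((hasDerivAt_id x).const_mul c)
  refine h.congr_deriv ?_
  rw [← inv_inv (1 + _), inv_one_add_tan_sq hcos]
  simp [div_eq_inv_mul, mul_comm]

lemma continuousOn_phi (hc : 0 < c) (hc' : c < π / 2) :
    ContinuousOn (phi c) (Icc (-1) 1) := fun _ hx =>
  (hasDerivAt_phi hc.ne' (cos_mul_pos hc.le hc' hx).ne').continuousAt.continuousWithinAt

lemma continuousOn_tan_mul (hc : 0 ≤ c) (hc' : c < π / 2) :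
    ContinuousOn (fun x => tan (c * x)) (Icc (-1) 1) := fun _ hx =>
  (hasDerivAt_tan_mul (cos_mul_pos hc hc' hx).ne').continuousAt.continuousWithinAt

lemma phi_neg (c x : ℝ) : phi c (-x) = phi c x := by
  simp [phi]

lemma phi_nonneg (hc : 0 < c) (hc' : c < π / 2) (hx : x ∈ Icc (-1 : ℝ) 1) : 0 ≤ phi c x := by
  have hlog : log (cos (c * x)) ≤ 0 :=
    log_nonpos (cos_mul_pos hc.le hc' hx).le (cos_le_one _)
  have : 0 ≤ 1 / c := by positivity
  unfold phi; nlinarith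

lemma phi_le_phi_one (hc : 0 < c) (hc' : c < π / 2) (hx : x ∈ Icc (-1 : ℝ) 1) :
    phi c x ≤ phi c 1 := by
  have hcos : cos c ≤ cos (c * x) := by
    rw [← cos_abs (c * x)]
    refine cos_le_cos_of_nonneg_of_le_pi (abs_nonneg _) (by linarith [pi_pos]) ?_
    rw [abs_mul, abs_of_pos hc]
    nlinarith [abs_le.2 ⟨hx.1, hx.2⟩]
  have hlog := log_le_log (cos_pos_of_mem_Ioo ⟨by linarith, hc'⟩) hcos
  have : 0 ≤ 1 / c := by positivity
  unfold phi; rw [mul_one]; nlinarith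

lemma abs_tan_mul_le (hc : 0 ≤ c) (hc' : c < π / 2) (hx : x ∈ Icc (-1 : ℝ) 1) :
    |tan (c * x)| ≤ tan c := by
  have hmem : ∀ y ∈ Icc (-1 : ℝ) 1, c * y ∈ Ioo (-(π / 2)) (π / 2) := fun y hy => by
    constructor <;> nlinarith [hy.1, hy.2]
  have hmono := strictMonoOn_tan.monotoneOn
  have hneg : c * -1 = -c := by ring
  rw [abs_le, ← tan_neg, ← hneg]
  constructor
  · exact hmono (hmem _ ⟨le_rfl, by norm_num⟩) (hmem x hx) (by nlinarith [hx.1])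
  · simpa using hmono (hmem x hx) (hmem _ ⟨by norm_num, le_rfl⟩) (by nlinarith [hx.2])

end Phi

lemma pi_div_four_lt_pi_div_two : π / 4 < π / 2 := by linarith [pi_pos]

lemma phi_pi_div_four_one : phi (π / 4) 1 = 2 / π * log 2 := by
  have hsqrt : log (√2 / 2) = -(log 2 / 2) := by
    rw [log_div (by positivity) (by norm_num), log_sqrt (by norm_num)]
    ring
  rw [phi, mul_one, cos_pi_div_four, hsqrt]
  field_simp
  ring

/-- At an interior minimum of `W`, with `p = u_x`, `q = φ_x`, `m = u - w_ε` and `P = u_xx`,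
`hfirst` and `hsecond` are the first- and second-derivative tests in `x` and `htime` is the
test in `t` combined with the equation. -/
lemma nonneg_of_interior_min_conditions {c ε x p q m P : ℝ} (hc₀ : 0 ≤ c) (hc₁ : c ≤ 1)
    (hε : 0 < ε) (hx : x ^ 2 ≤ 1) (hq : |q| ≤ 1)
    (hfirst : (p - q) * (3 - x ^ 2) = 2 * x * m)
    (hsecond : 0 ≤ (P - c * (1 + q ^ 2)) * (3 - x ^ 2) - 4 * x * (p - q) - 2 * m)
    (htime : P / (1 + p ^ 2) - (c - ε) - 6 * m ≤ 0) : 0 ≤ m := by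
  by_contra! hm
  have hψ : 2 ≤ 3 - x ^ 2 := by linarith
  have hx_abs : |x| ≤ 1 := abs_le_one_iff_mul_self_le_one.2 (by nlinarith)
  have hpq : |p - q| ≤ -m := by
    have h : |p - q| * (3 - x ^ 2) = 2 * |x| * -m := by
      rw [← abs_of_pos (by linarith : (0 : ℝ) < 3 - x ^ 2), ← abs_mul, hfirst, abs_mul,
        abs_mul, abs_of_neg hm, abs_two]
    nlinarith [abs_nonneg (p - q), abs_nonneg x]
  have hP_lower : 3 * m ≤ P - c * (1 + q ^ 2) := by
    have hsub : 4 * x * (p - q) * (3 - x ^ 2) = 8 * x ^ 2 * m := by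
      linear_combination (4 * x) * hfirst
    by_contra! h
    have hneg : (P - c * (1 + q ^ 2) - 3 * m) * (3 - x ^ 2) ^ 2 < 0 :=
      mul_neg_of_neg_of_pos (by linarith) (by positivity)
    have hweight : 0 ≤ -m * ((1 - x ^ 2) * (7 - x ^ 2)) :=
      mul_nonneg (by linarith) (by nlinarith)
    nlinarith [mul_nonneg hsecond (by linarith : (0 : ℝ) ≤ 3 - x ^ 2)]
  have hP_upper : P ≤ (c - ε + 6 * m) * (1 + p ^ 2) := by
    rw [← div_le_iff₀ (by positivity)]
    linarith
  have hsq : m * (|p| + 1) ≤ c * (q ^ 2 - p ^ 2) := by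
    have habs : |q ^ 2 - p ^ 2| ≤ -m * (|p| + 1) := by
      rw [show q ^ 2 - p ^ 2 = (q + p) * -(p - q) by ring, abs_mul, abs_neg]
      calc |q + p| * |p - q| ≤ (1 + |p|) * -m :=
            mul_le_mul ((abs_add_le q p).trans (by linarith)) hpq (abs_nonneg _) (by positivity)
        _ = -m * (|p| + 1) := by ring
    nlinarith [neg_abs_le (q ^ 2 - p ^ 2), abs_nonneg p, abs_nonneg (q ^ 2 - p ^ 2)]
  have hquad : 0 < 2 + 6 * p ^ 2 - |p| := by nlinarith [sq_abs p]
  nlinarith [mul_pos (neg_pos.2 hm) hquad, mul_nonneg hε.le (sq_nonneg p)]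

noncomputable def barrier (ε x t : ℝ) : ℝ :=
  phi (π / 4) x + (π / 4 - ε) * t + 1 - phi (π / 4) 1

noncomputable def weightedGap (u : ℝ → ℝ → ℝ) (ε x t : ℝ) : ℝ :=
  (u x t - barrier ε x t) * (3 - x ^ 2)

noncomputable def weightedGapDerivX (u : ℝ → ℝ → ℝ) (ε x t : ℝ) : ℝ :=
  (ux u x t - tan (π / 4 * x)) * (3 - x ^ 2) - 2 * x * (u x t - barrier ε x t)

section Barrier

variable {ε x t : ℝ}

lemma hasDerivAt_barrier_x (hx : x ∈ Icc (-1 : ℝ) 1) :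
    HasDerivAt (fun y => barrier ε y t) (tan (π / 4 * x)) x := by
  have h := hasDerivAt_phi (by positivity)
    (cos_mul_pos (by positivity) pi_div_four_lt_pi_div_two hx).ne'
  exact ((h.add_const ((π / 4 - ε) * t)).add_const 1).sub_const (phi (π / 4) 1)

lemma hasDerivAt_barrier_t : HasDerivAt (fun s => barrier ε x s) (π / 4 - ε) t := by
  have h := ((((hasDerivAt_id' t).const_mul (π / 4 - ε)).const_add (phi (π / 4) x)).add_const
    1).sub_const (phi (π / 4) 1)
  rw [mul_one] at h
  exact h

lemma continuousOn_barrier :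
    ContinuousOn (fun p : ℝ × ℝ => barrier ε p.1 p.2) (Icc (-1) 1 ×ˢ (univ : Set ℝ)) := by
  have h := (continuousOn_phi (by positivity) pi_div_four_lt_pi_div_two).comp
    (continuous_fst.continuousOn (s := Icc (-1) 1 ×ˢ (univ : Set ℝ)))
    (fun p hp => (mem_prod.1 hp).1)
  exact ((h.add (by fun_prop)).add continuousOn_const).sub continuousOn_const

lemma barrier_one : barrier ε 1 t = (π / 4 - ε) * t + 1 := by
  unfold barrier; ring

lemma barrier_neg_one : barrier ε (-1) t = (π / 4 - ε) * t + 1 := by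
  unfold barrier; rw [phi_neg]; ring

lemma barrier_zero_le_one (hx : x ∈ Icc (-1 : ℝ) 1) : barrier ε x 0 ≤ 1 := by
  have := phi_le_phi_one (by positivity) pi_div_four_lt_pi_div_two hx
  unfold barrier; linarith

end Barrier

section Solution

variable {u : ℝ → ℝ → ℝ} {u0 : ℝ → ℝ} {T ε x t : ℝ}

lemma hasDerivAt_weightedGap (hu : IsClassicalSolB u u0 T) (ht : t ∈ Ioc 0 T)
    (hx : x ∈ Ioo (-1 : ℝ) 1) :
    HasDerivAt (fun y => weightedGap u ε y t) (weightedGapDerivX u ε x t) x := by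
  have hu_x : HasDerivAt (fun y => u y t) (ux u x t) x := (hu.2.2.1 t ht x hx).1.hasDerivAt
  have hψ : HasDerivAt (fun y : ℝ => 3 - y ^ 2) (-(2 * x)) x := by
    simpa using (hasDerivAt_pow 2 x).const_sub 3
  refine ((hu_x.sub (hasDerivAt_barrier_x (Ioo_subset_Icc_self hx))).mul hψ).congr_deriv ?_
  simp only [weightedGapDerivX, Pi.sub_apply]; ring

lemma hasDerivAt_weightedGapDerivX (hu : IsClassicalSolB u u0 T) (ht : t ∈ Ioc 0 T)
    (hx : x ∈ Ioo (-1 : ℝ) 1) :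
    HasDerivAt (fun y => weightedGapDerivX u ε y t)
      ((uxx u x t - π / 4 * (1 + tan (π / 4 * x) ^ 2)) * (3 - x ^ 2)
        - 4 * x * (ux u x t - tan (π / 4 * x)) - 2 * (u x t - barrier ε x t)) x := by
  obtain ⟨hu_x, hu_xx, -, -⟩ := hu.2.2.1 t ht x hx
  have hcos := cos_mul_pos (by positivity) pi_div_four_lt_pi_div_two (Ioo_subset_Icc_self hx)
  have hψ : HasDerivAt (fun y : ℝ => 3 - y ^ 2) (-(2 * x)) x := by
    simpa using (hasDerivAt_pow 2 x).const_sub 3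
  have hlin : HasDerivAt (fun y : ℝ => 2 * y) 2 x := by
    simpa using (hasDerivAt_id x).const_mul 2
  have hgap := hu_x.hasDerivAt.sub (hasDerivAt_barrier_x (ε := ε) (t := t) (Ioo_subset_Icc_self hx))
  refine (((hu_xx.hasDerivAt.sub (hasDerivAt_tan_mul hcos.ne')).mul hψ).sub
    (hlin.mul hgap)).congr_deriv ?_
  simp only [uxx, ux, Pi.sub_apply]; ring

lemma continuousOn_weightedGap (hu : IsClassicalSolB u u0 T) :
    ContinuousOn (fun p : ℝ × ℝ => weightedGap u ε p.1 p.2) (Icc (-1) 1 ×ˢ Icc 0 T) :=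
  (hu.1.sub (continuousOn_barrier.mono (prod_mono subset_rfl (subset_univ _)))).mul
    (by fun_prop)

lemma continuousOn_weightedGapDerivX (hu : IsClassicalSolB u u0 T) (ht : t ∈ Icc 0 T) :
    ContinuousOn (fun x => weightedGapDerivX u ε x t) (Icc (-1) 1) := by
  have hu_t := ContinuousOn.uncurry_right (f := u) t ht hu.1
  have hux_t := ContinuousOn.uncurry_right (f := ux u) t ht hu.2.1
  have hbarrier := ContinuousOn.uncurry_right (f := barrier ε) t (mem_univ t)
    continuousOn_barrier
  have htan := continuousOn_tan_mul (by positivity) pi_div_four_lt_pi_div_two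
  exact ((hux_t.sub htan).mul (by fun_prop)).sub
    ((continuous_const_mul 2).continuousOn.mul (hu_t.sub hbarrier))

lemma weightedGapDerivX_one (hu : IsClassicalSolB u u0 T) (ht : t ∈ Ioc 0 T) :
    weightedGapDerivX u ε 1 t = 2 * (π / 4 - ε) * t := by
  rw [weightedGapDerivX, (hu.2.2.2.1 t ht).1, barrier_one, mul_one, tan_pi_div_four]
  ring

lemma weightedGapDerivX_neg_one (hu : IsClassicalSolB u u0 T) (ht : t ∈ Ioc 0 T) :
    weightedGapDerivX u ε (-1) t = -(2 * (π / 4 - ε) * t) := by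
  rw [weightedGapDerivX, (hu.2.2.2.1 t ht).2, barrier_neg_one, mul_neg_one, tan_neg,
    tan_pi_div_four]
  ring

lemma not_isMinOn_weightedGap_one (hu : IsClassicalSolB u u0 T) (hε : ε < π / 4)
    (ht : t ∈ Ioc 0 T) : ¬ IsMinOn (fun x => weightedGap u ε x t) (Icc (-1) 1) 1 := by
  intro hmin
  have hderiv := hasDerivWithinAt_Icc_right_of_continuousWithinAt (by norm_num)
    (ContinuousOn.uncurry_right (f := weightedGap u ε) t (Ioc_subset_Icc_self ht)
      (continuousOn_weightedGap hu))
    (fun x hx => hasDerivAt_weightedGap hu ht hx)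
    (continuousOn_weightedGapDerivX hu (Ioc_subset_Icc_self ht) 1 (by norm_num))
  have hle := hmin.localize.hasDerivWithinAt_nonpos hderiv (by norm_num) subset_rfl
  rw [weightedGapDerivX_one hu ht] at hle
  nlinarith [ht.1]

lemma not_isMinOn_weightedGap_neg_one (hu : IsClassicalSolB u u0 T) (hε : ε < π / 4)
    (ht : t ∈ Ioc 0 T) : ¬ IsMinOn (fun x => weightedGap u ε x t) (Icc (-1) 1) (-1) := by
  intro hmin
  have hderiv := hasDerivWithinAt_Icc_left_of_continuousWithinAt (by norm_num)
    (ContinuousOn.uncurry_right (f := weightedGap u ε) t (Ioc_subset_Icc_self ht)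
      (continuousOn_weightedGap hu))
    (fun x hx => hasDerivAt_weightedGap hu ht hx)
    (continuousOn_weightedGapDerivX hu (Ioc_subset_Icc_self ht) (-1) (by norm_num))
  have hle := hmin.localize.hasDerivWithinAt_nonneg hderiv (by norm_num) subset_rfl
  rw [weightedGapDerivX_neg_one hu ht] at hle
  nlinarith [ht.1]

lemma time_derivative_condition (hu : IsClassicalSolB u u0 T) (hx : x ∈ Ioo (-1 : ℝ) 1)
    (ht : t ∈ Ioc 0 T)
    (hmin : IsMinOn (fun s => weightedGap u ε x s * exp (-(6 * s))) (Icc 0 t) t) :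
    ut u x t - (π / 4 - ε) - 6 * (u x t - barrier ε x t) ≤ 0 := by
  have hu_t : HasDerivAt (fun s => u x s) (ut u x t) t := (hu.2.2.1 t ht x hx).2.2.1.hasDerivAt
  have hexp : HasDerivAt (fun s : ℝ => exp (-(6 * s))) (exp (-(6 * t)) * -6) t := by
    simpa using ((hasDerivAt_id t).const_mul 6).neg.exp
  have hd : HasDerivAt (fun s => weightedGap u ε x s * exp (-(6 * s)))
      ((ut u x t - (π / 4 - ε) - 6 * (u x t - barrier ε x t))
        * ((3 - x ^ 2) * exp (-(6 * t)))) t := by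
    refine (((hu_t.sub hasDerivAt_barrier_t).mul_const (3 - x ^ 2)).mul hexp).congr_deriv ?_
    simp only [Pi.sub_apply]; ring
  have hle := hmin.localize.hasDerivWithinAt_nonpos hd.hasDerivWithinAt ht.1 subset_rfl
  have hx2 : x ^ 2 < 3 := by nlinarith [hx.1, hx.2]
  exact nonpos_of_mul_nonpos_left hle (by have := exp_pos (-(6 * t)); positivity)

lemma barrier_le_of_isMinOn (hu : IsClassicalSolB u u0 T) (hε : 0 < ε)
    (hx : x ∈ Ioo (-1 : ℝ) 1) (ht : t ∈ Ioc 0 T)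
    (hmin_x : IsMinOn (fun y => weightedGap u ε y t) (Icc (-1) 1) x)
    (hmin_t : IsMinOn (fun s => weightedGap u ε x s * exp (-(6 * s))) (Icc 0 t) t) :
    barrier ε x t ≤ u x t := by
  have hlocal : IsLocalMin (fun y => weightedGap u ε y t) x :=
    hmin_x.isLocalMin (Icc_mem_nhds hx.1 hx.2)
  have hfirst : weightedGapDerivX u ε x t = 0 :=
    hlocal.hasDerivAt_eq_zero (hasDerivAt_weightedGap hu ht hx)
  have hsecond := hlocal.deriv_deriv_nonneg (hasDerivAt_weightedGap hu ht hx).continuousAt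
  have hderiv : deriv (fun y => weightedGap u ε y t) =ᶠ[𝓝 x]
      fun y => weightedGapDerivX u ε y t := by
    filter_upwards [Ioo_mem_nhds hx.1 hx.2] with y hy
    exact (hasDerivAt_weightedGap hu ht hy).deriv
  rw [hderiv.deriv_eq, (hasDerivAt_weightedGapDerivX hu ht hx).deriv] at hsecond
  have htime := time_derivative_condition hu hx ht hmin_t
  rw [(hu.2.2.1 t ht x hx).2.2.2] at htime
  have hq := abs_tan_mul_le (by positivity) pi_div_four_lt_pi_div_two (Ioo_subset_Icc_self hx)
  rw [tan_pi_div_four] at hq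
  have hm := nonneg_of_interior_min_conditions (by positivity) (by linarith [pi_le_four]) hε
    (by nlinarith [hx.1, hx.2]) hq (by rw [weightedGapDerivX] at hfirst; linarith) hsecond htime
  linarith

theorem barrier_le (hu : IsClassicalSolB u u0 T) (hu0 : ∀ x ∈ Icc (-1 : ℝ) 1, 1 ≤ u0 x)
    (hε : 0 < ε) (hε' : ε < π / 4) (hx : x ∈ Icc (-1 : ℝ) 1) (ht : t ∈ Icc 0 T) :
    barrier ε x t ≤ u x t := by
  set W : ℝ × ℝ → ℝ := fun p => weightedGap u ε p.1 p.2 * exp (-(6 * p.2)) with hW_def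
  have hW : ContinuousOn W (Icc (-1) 1 ×ˢ Icc 0 T) :=
    (continuousOn_weightedGap hu).mul (by fun_prop)
  obtain ⟨⟨x₀, t₀⟩, ⟨hx₀, ht₀⟩, hmin⟩ :=
    (isCompact_Icc.prod isCompact_Icc).exists_isMinOn ⟨(x, t), hx, ht⟩ hW
  have hweight : ∀ {y s : ℝ}, y ∈ Icc (-1 : ℝ) 1 → 0 < (3 - y ^ 2) * exp (-(6 * s)) :=
    fun hy => mul_pos (by nlinarith [hy.1, hy.2]) (exp_pos _)
  suffices hW₀ : 0 ≤ W (x₀, t₀) by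
    have h := hW₀.trans (hmin (mk_mem_prod hx ht))
    simp only [hW_def, weightedGap, mul_assoc] at h
    linarith [nonneg_of_mul_nonneg_left h (hweight hx)]
  rcases ht₀.1.eq_or_lt with rfl | ht₀_pos
  · simp only [hW_def, weightedGap, mul_assoc, hu.2.2.2.2 x₀ hx₀]
    exact mul_nonneg (by linarith [hu0 x₀ hx₀, barrier_zero_le_one (ε := ε) hx₀])
      (hweight hx₀).le
  have ht₀' : t₀ ∈ Ioc 0 T := ⟨ht₀_pos, ht₀.2⟩
  have hmin_x : IsMinOn (fun y => weightedGap u ε y t₀) (Icc (-1) 1) x₀ := fun y hy =>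
    le_of_mul_le_mul_right (hmin (mk_mem_prod hy ht₀)) (exp_pos _)
  rcases hx₀.1.eq_or_lt with rfl | hx₀_gt
  · exact absurd hmin_x (not_isMinOn_weightedGap_neg_one hu hε' ht₀')
  rcases hx₀.2.eq_or_lt with rfl | hx₀_lt
  · exact absurd hmin_x (not_isMinOn_weightedGap_one hu hε' ht₀')
  have hmin_t : IsMinOn (fun s => weightedGap u ε x₀ s * exp (-(6 * s))) (Icc 0 t₀) t₀ :=
    fun s hs => hmin (mk_mem_prod hx₀ ⟨hs.1, hs.2.trans ht₀.2⟩)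
  have h := barrier_le_of_isMinOn hu hε ⟨hx₀_gt, hx₀_lt⟩ ht₀' hmin_x hmin_t
  simp only [hW_def, weightedGap, mul_assoc]
  exact mul_nonneg (sub_nonneg.2 h) (hweight hx₀).le

end Solution

theorem stmt_4_general (T : ℝ) (u0 : ℝ → ℝ)
    (hu0 : ∀ x ∈ Set.Icc (-1 : ℝ) 1, 1 ≤ u0 x)
    (u : ℝ → ℝ → ℝ) (hu : IsClassicalSolB u u0 T)
    (φ1 : ℝ → ℝ) (hφ1 : ∀ x : ℝ, φ1 x = -(4 / π) * Real.log (Real.cos (π * x / 4))) :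
    ∀ x ∈ Set.Icc (-1 : ℝ) 1, ∀ t ∈ Set.Icc (0 : ℝ) T,
      u x t ≥ φ1 x + (π / 4) * t + 1 - φ1 1 ∧
      u x t ≥ (π / 4) * t - ((2 / π) * Real.log 2 - 1) := by
  intro x hx t ht
  have hφ : φ1 = phi (π / 4) := funext fun y => by rw [hφ1, phi]; ring_nf
  have hlim : Tendsto (fun ε => barrier ε x t) (𝓝[>] 0) (𝓝 (barrier 0 x t)) :=
    ((by unfold barrier; fun_prop : Continuous fun ε => barrier ε x t).tendsto 0).mono_left
      nhdsWithin_le_nhds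
  have hbound : barrier 0 x t ≤ u x t := le_of_tendsto hlim <| by
    filter_upwards [Ioo_mem_nhdsGT (by positivity : (0 : ℝ) < π / 4)] with ε hε
    exact barrier_le hu hu0 hε.1 hε.2 hx ht
  rw [barrier, sub_zero] at hbound
  have hφ_nonneg := phi_nonneg (by positivity) pi_div_four_lt_pi_div_two hx
  rw [hφ]
  constructor <;> linarith [phi_pi_div_four_one]

/-- lower bound. If `u` is a classical solution of (B) on
`[-1,1] × [0,T]` with `u0 ≥ 1`, then
`u(x,t) ≥ φ(x;1) + (π/4)t + 1 − φ(1;1)` where `φ(x;1) = -(4/π)·ln(cos(πx/4))`,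
and in particular `u(x,t) ≥ (π/4)t − C₁` with `C₁ = (2/π)·ln 2 − 1`. -/
theorem stmt_4 (T : ℝ) (hT : 0 < T) (u0 : ℝ → ℝ)
    (hu0 : ∀ x ∈ Set.Icc (-1 : ℝ) 1, 1 ≤ u0 x)
    (u : ℝ → ℝ → ℝ) (hu : IsClassicalSolB u u0 T)
    (φ1 : ℝ → ℝ) (hφ1 : ∀ x : ℝ, φ1 x = -(4 / π) * Real.log (Real.cos (π * x / 4))) :
    ∀ x ∈ Set.Icc (-1 : ℝ) 1, ∀ t ∈ Set.Icc (0 : ℝ) T,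
      u x t ≥ φ1 x + (π / 4) * t + 1 - φ1 1 ∧
      u x t ≥ (π / 4) * t - ((2 / π) * Real.log 2 - 1) :=
  stmt_4_general T u0 hu0 u hu φ1 hφ1
end

section
/- Let u be a classical solution of problem (B) on [-1,1]×[0,T] with initial data u0 ∈ C^1([-1,1]), and suppose |u(x,t)| ≤ K for all x ∈ [-1,1], t ∈ [0,T]. Then |u_x(x,t)| ≤ max{ sup_{[-1,1]} |u0'| , K } for all x ∈ [-1,1] and t ∈ [0,T]. -/
open Real

/-!
Applying the argument to `u` and to `-u` (again a solution, with data `-u0`), it suffices to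
bound `u_x` from above by `B = max (sup |u0'|) K`. The equation cannot be differentiated in `x`
(nothing is known about `u_xt`), so instead `u` is compared with its translate `u(· + h, ·)`:
both solve the equation, and at an interior maximum of `u(x + h, t) - u(x, t) - ε t` the slopes
agree, so the two equations have the same coefficient `1 / (1 + u_x²)` and the time derivative
`≥ ε` contradicts the second-derivative test. Hence `u(x + h, t) - u(x, t)` is controlled by `u_x`
near the parabolic boundary, where `u_x ≤ B + η` for small `h` by the boundary condition, the
initial data and uniform continuity; dividing by `h → 0` gives `u_x ≤ B`.
-/

open Set Filter Topology

theorem IsLocalMax.deriv_deriv_nonpos {f : ℝ → ℝ} {x₀ : ℝ} (h : IsLocalMax f x₀)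
    (hc : ContinuousAt f x₀) : deriv (deriv f) x₀ ≤ 0 := by
  by_contra! hpos
  have hconst : f =ᶠ[𝓝 x₀] fun _ => f x₀ := by
    filter_upwards [h, isLocalMin_of_deriv_deriv_pos hpos h.deriv_eq_zero hc] with y hmax hmin
    exact le_antisymm hmax hmin
  have hderiv : deriv f =ᶠ[𝓝 x₀] fun _ => 0 := by
    filter_upwards [hconst.eventuallyEq_nhds] with y hy
    rw [hy.deriv_eq, deriv_const]
  rw [hderiv.deriv_eq, deriv_const] at hpos
  exact lt_irrefl _ hpos

theorem IsMaxOn.nonneg_of_hasDerivAt_right {f : ℝ → ℝ} {a b f' : ℝ} (hab : a < b)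
    (h : IsMaxOn f (Icc a b) b) (hf : HasDerivAt f f' b) : 0 ≤ f' := by
  have hcone : a - b ∈ posTangentConeAt (Icc a b) b :=
    sub_mem_posTangentConeAt_of_segment_subset
      ((convex_Icc a b).segment_subset (right_mem_Icc.2 hab.le) (left_mem_Icc.2 hab.le))
  have := h.localize.hasFDerivWithinAt_nonpos hf.hasDerivWithinAt.hasFDerivWithinAt hcone
  simp only [ContinuousLinearMap.toSpanSingleton_apply, smul_eq_mul] at this
  nlinarith

theorem HasDerivAt.le_of_eventually_sub_le {f : ℝ → ℝ} {f' x C : ℝ} (hf : HasDerivAt f f' x)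
    (h : ∀ᶠ s in 𝓝[>] 0, f (x + s) - f x ≤ C * s) : f' ≤ C := by
  refine le_of_tendsto ((hasDerivAt_iff_tendsto_slope_zero.1 hf).mono_left
    (nhdsGT_le_nhdsNE 0)) ?_
  filter_upwards [h, self_mem_nhdsWithin] with s hs (hs0 : 0 < s)
  rw [smul_eq_mul, inv_mul_le_iff₀ hs0]
  linarith

theorem ContinuousOn.le_of_forall_Ioo_le {f : ℝ → ℝ} {a b B : ℝ} (hab : a < b)
    (hf : ContinuousOn f (Icc a b)) (h : ∀ x ∈ Ioo a b, f x ≤ B) : ∀ x ∈ Icc a b, f x ≤ B := by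
  intro x hx
  rw [← closure_Ioo hab.ne] at hx
  exact ContinuousWithinAt.closure_le hx
    ((hf _ (closure_Ioo hab.ne ▸ hx)).mono Ioo_subset_Icc_self) continuousWithinAt_const h

/-- The interior clause of `IsClassicalSolB`, on `(a, b) × (0, T]`; reducible, so that for
`a = -1`, `b = 1` it is literally that clause. -/
abbrev SolvesB (u : ℝ → ℝ → ℝ) (a b T : ℝ) : Prop :=
  ∀ t ∈ Ioc (0 : ℝ) T, ∀ x ∈ Ioo a b,
    DifferentiableAt ℝ (fun y => u y t) x ∧ DifferentiableAt ℝ (fun y => ux u y t) x ∧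
    DifferentiableAt ℝ (fun s => u x s) t ∧ ut u x t = uxx u x t / (1 + ux u x t ^ 2)

section Transformations

variable (u : ℝ → ℝ → ℝ) (x t h : ℝ)

theorem ux_neg : ux (fun x t => -u x t) x t = -ux u x t := deriv.fun_neg

theorem uxx_neg : uxx (fun x t => -u x t) x t = -uxx u x t := by
  simp only [uxx, ux_neg]
  exact deriv.fun_neg

theorem ut_neg : ut (fun x t => -u x t) x t = -ut u x t := deriv.fun_neg

theorem ux_comp_add_const : ux (fun x t => u (x + h) t) x t = ux u (x + h) t :=
  deriv_comp_add_const (fun y => u y t) h x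

theorem uxx_comp_add_const : uxx (fun x t => u (x + h) t) x t = uxx u (x + h) t := by
  simp only [uxx, ux_comp_add_const]
  exact deriv_comp_add_const (fun y => ux u y t) h x

theorem ut_comp_add_const : ut (fun x t => u (x + h) t) x t = ut u (x + h) t := rfl

end Transformations

theorem sub_le_mul_of_ux_le {u : ℝ → ℝ → ℝ} {t a b C : ℝ} (hab : a ≤ b)
    (hcont : ContinuousOn (fun y => u y t) (Icc a b))
    (hdiff : ∀ x ∈ Ioo a b, DifferentiableAt ℝ (fun y => u y t) x)
    (hC : ∀ x ∈ Ioo a b, ux u x t ≤ C) : u b t - u a t ≤ C * (b - a) :=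
  (convex_Icc a b).image_sub_le_mul_sub_of_deriv_le hcont
    (fun x hx => (hdiff x (by rwa [interior_Icc] at hx)).differentiableWithinAt)
    (fun x hx => hC x (by rwa [interior_Icc] at hx)) a (left_mem_Icc.2 hab) b
    (right_mem_Icc.2 hab) hab

theorem exists_ux_le_add_near_boundary {u : ℝ → ℝ → ℝ} {T : ℝ}
    (hcw : ContinuousOn (fun p : ℝ × ℝ => ux u p.1 p.2) (Icc (-1) 1 ×ˢ Icc 0 T)) {B η : ℝ}
    (hη : 0 < η) (hB0 : ∀ x ∈ Ioo (-1 : ℝ) 1, ux u x 0 ≤ B)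
    (hBl : ∀ t ∈ Ioc 0 T, ux u (-1) t ≤ B) (hBr : ∀ t ∈ Ioc 0 T, ux u 1 t ≤ B) :
    ∃ δ > 0, ∀ t ∈ Icc 0 T, ∀ x ∈ Ioo (-1 : ℝ) 1, (t = 0 ∨ x < -1 + δ ∨ 1 - δ < x) →
      ux u x t ≤ B + η := by
  obtain ⟨δ, hδ, hclose⟩ := Metric.uniformContinuousOn_iff.1
    ((isCompact_Icc.prod isCompact_Icc).uniformContinuousOn_of_continuous hcw) η hη
  have hnear : ∀ t ∈ Icc 0 T, ∀ x ∈ Ioo (-1 : ℝ) 1, ∀ z ∈ Icc (-1 : ℝ) 1, |x - z| < δ →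
      ux u x t < ux u z t + η := by
    intro t ht x hx z hz hxz
    have hdist : dist (x, t) (z, t) < δ := by simpa [Prod.dist_eq, Real.dist_eq] using hxz
    have := hclose (x, t) ⟨Ioo_subset_Icc_self hx, ht⟩ (z, t) ⟨hz, ht⟩ hdist
    rw [Real.dist_eq] at this
    linarith [(abs_lt.1 this).2]
  refine ⟨δ, hδ, fun t ht x hx hbdry => ?_⟩
  rcases ht.1.eq_or_lt with rfl | ht0
  · linarith [hB0 x hx]
  rcases hbdry with rfl | hl | hr
  · exact absurd ht0 (lt_irrefl 0)
  · linarith [hnear t ht x hx (-1) (left_mem_Icc.2 (by norm_num))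
      (by rw [abs_lt]; constructor <;> linarith [hx.1]), hBl t ⟨ht0, ht.2⟩]
  · linarith [hnear t ht x hx 1 (right_mem_Icc.2 (by norm_num))
      (by rw [abs_lt]; constructor <;> linarith [hx.2]), hBr t ⟨ht0, ht.2⟩]

namespace SolvesB

variable {u v : ℝ → ℝ → ℝ} {a b T : ℝ}

theorem mono {a' b' : ℝ} (hu : SolvesB u a b T) (ha : a ≤ a') (hb : b' ≤ b) :
    SolvesB u a' b' T :=
  fun t ht x hx => hu t ht x ⟨ha.trans_lt hx.1, hx.2.trans_le hb⟩

theorem neg (hu : SolvesB u a b T) : SolvesB (fun x t => -u x t) a b T := by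
  intro t ht x hx
  obtain ⟨hux, huxx, hut, heq⟩ := hu t ht x hx
  refine ⟨hux.neg, ?_, hut.neg, ?_⟩
  · simpa only [ux_neg] using huxx.fun_neg
  · rw [ut_neg, uxx_neg, ux_neg, heq]
    ring

theorem comp_add_const (hu : SolvesB u a b T) (h : ℝ) :
    SolvesB (fun x t => u (x + h) t) (a - h) (b - h) T := by
  intro t ht x hx
  obtain ⟨hux, huxx, hut, heq⟩ := hu t ht (x + h) ⟨by linarith [hx.1], by linarith [hx.2]⟩
  refine ⟨differentiableAt_comp_add_const.2 hux, ?_, hut, ?_⟩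
  · simpa only [ux_comp_add_const] using differentiableAt_comp_add_const.2 huxx
  · rwa [ut_comp_add_const, uxx_comp_add_const, ux_comp_add_const]

theorem not_isMaxOn_sub_sub_mul (hu : SolvesB u a b T) (hv : SolvesB v a b T) {ε y s : ℝ}
    (hε : 0 < ε) (hy : y ∈ Ioo a b) (hs : s ∈ Ioc 0 T) :
    ¬ IsMaxOn (fun p : ℝ × ℝ => u p.1 p.2 - v p.1 p.2 - ε * p.2) (Icc a b ×ˢ Icc 0 T) (y, s) := by
  intro hmax
  obtain ⟨hux, huxx, hut, hequ⟩ := hu s hs y hy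
  obtain ⟨hvx, hvxx, hvt, heqv⟩ := hv s hs y hy
  have hspace : IsLocalMax (fun x => u x s - v x s) y := by
    filter_upwards [Icc_mem_nhds hy.1 hy.2] with x hx
    have hxs : u x s - v x s - ε * s ≤ u y s - v y s - ε * s :=
      hmax (show (x, s) ∈ Icc a b ×ˢ Icc 0 T from ⟨hx, hs.1.le, hs.2⟩)
    linarith
  have hderiv : deriv (fun x => u x s - v x s) =ᶠ[𝓝 y] fun x => ux u x s - ux v x s := by
    filter_upwards [Ioo_mem_nhds hy.1 hy.2] with x hx
    exact deriv_sub (hu s hs x hx).1 (hv s hs x hx).1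
  have hslope : ux u y s = ux v y s :=
    sub_eq_zero.1 (hderiv.eq_of_nhds ▸ hspace.deriv_eq_zero)
  have hcurv : uxx u y s - uxx v y s ≤ 0 := by
    have := hspace.deriv_deriv_nonpos (hux.continuousAt.sub hvx.continuousAt)
    rwa [hderiv.deriv_eq, deriv_fun_sub huxx hvxx] at this
  have htime : ε ≤ ut u y s - ut v y s := by
    have hmax' : IsMaxOn (fun r => u y r - v y r - ε * r) (Icc 0 s) s := fun r hr =>
      hmax (show (y, r) ∈ Icc a b ×ˢ Icc 0 T from ⟨Ioo_subset_Icc_self hy, hr.1, hr.2.trans hs.2⟩)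
    have := hmax'.nonneg_of_hasDerivAt_right hs.1
      ((hut.hasDerivAt.sub hvt.hasDerivAt).sub ((hasDerivAt_id s).const_mul ε))
    rw [ut, ut]
    linarith
  rw [hequ, heqv, hslope, div_sub_div_same] at htime
  have : (uxx u y s - uxx v y s) / (1 + ux v y s ^ 2) ≤ 0 :=
    div_nonpos_of_nonpos_of_nonneg hcurv (by positivity)
  linarith

theorem sub_le_of_parabolicBoundary (hu : SolvesB u a b T) (hv : SolvesB v a b T)
    (hcu : ContinuousOn (fun p : ℝ × ℝ => u p.1 p.2) (Icc a b ×ˢ Icc 0 T))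
    (hcv : ContinuousOn (fun p : ℝ × ℝ => v p.1 p.2) (Icc a b ×ˢ Icc 0 T)) {C : ℝ}
    (hbd : ∀ x ∈ Icc a b, ∀ t ∈ Icc 0 T, (t = 0 ∨ x = a ∨ x = b) → u x t - v x t ≤ C) :
    ∀ x ∈ Icc a b, ∀ t ∈ Icc 0 T, u x t - v x t ≤ C := by
  intro x hx t ht
  have hpert : ∀ ε > 0, u x t - v x t - ε * t ≤ C := by
    intro ε hε
    obtain ⟨⟨y, s⟩, ⟨hy, hs⟩, hmax⟩ := (isCompact_Icc.prod isCompact_Icc).exists_isMaxOn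
      (f := fun p : ℝ × ℝ => u p.1 p.2 - v p.1 p.2 - ε * p.2)
      ⟨(x, t), hx, ht⟩ ((hcu.sub hcv).sub (continuous_const.mul continuous_snd).continuousOn)
    have hxt : u x t - v x t - ε * t ≤ u y s - v y s - ε * s :=
      hmax (show (x, t) ∈ Icc a b ×ˢ Icc 0 T from ⟨hx, ht⟩)
    refine hxt.trans ?_
    by_cases hbdry : s = 0 ∨ y = a ∨ y = b
    · linarith [hbd y hy s hs hbdry, mul_nonneg hε.le hs.1]
    · push Not at hbdry
      exact absurd hmax (hu.not_isMaxOn_sub_sub_mul hv hε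
        ⟨hy.1.lt_of_ne' hbdry.2.1, hy.2.lt_of_ne hbdry.2.2⟩ ⟨hs.1.lt_of_ne' hbdry.1, hs.2⟩)
  have hlim : Tendsto (fun ε : ℝ => u x t - v x t - ε * t) (𝓝[>] 0) (𝓝 (u x t - v x t)) := by
    have hcont : Continuous fun ε : ℝ => u x t - v x t - ε * t := by fun_prop
    simpa using (hcont.tendsto 0).mono_left nhdsWithin_le_nhds
  exact le_of_tendsto hlim (eventually_nhdsWithin_of_forall hpert)

theorem shift_sub_le (hpde : SolvesB u (-1) 1 T)
    (hcu : ContinuousOn (fun p : ℝ × ℝ => u p.1 p.2) (Icc (-1) 1 ×ˢ Icc 0 T))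
    (hdiff : ∀ t ∈ Icc 0 T, ∀ x ∈ Ioo (-1 : ℝ) 1, DifferentiableAt ℝ (fun y => u y t) x)
    {h C : ℝ} (hh : 0 < h)
    (hC : ∀ t ∈ Icc 0 T, ∀ x ∈ Ioo (-1 : ℝ) 1, (t = 0 ∨ x < -1 + h ∨ 1 - h < x) →
      ux u x t ≤ C) :
    ∀ x ∈ Icc (-1 : ℝ) (1 - h), ∀ t ∈ Icc 0 T, u (x + h) t - u x t ≤ C * h := by
  have hshift : SolvesB (fun x t => u (x + h) t) (-1) (1 - h) T :=
    (hpde.comp_add_const h).mono (by linarith) le_rfl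
  have hcu_shift :
      ContinuousOn (fun p : ℝ × ℝ => u (p.1 + h) p.2) (Icc (-1) (1 - h) ×ˢ Icc 0 T) :=
    hcu.comp (f := fun p : ℝ × ℝ => (p.1 + h, p.2)) (by fun_prop)
      fun p hp => ⟨⟨by linarith [hp.1.1], by linarith [hp.1.2]⟩, hp.2⟩
  refine hshift.sub_le_of_parabolicBoundary (hpde.mono le_rfl (by linarith)) hcu_shift
    (hcu.mono (prod_mono (Icc_subset_Icc le_rfl (by linarith)) le_rfl)) ?_
  intro x hx t ht hbdry
  have hstep := sub_le_mul_of_ux_le (u := u) (t := t) (C := C) (by linarith : x ≤ x + h)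
    ((hcu.uncurry_right (f := u) t ht).mono (Icc_subset_Icc hx.1 (by linarith [hx.2])))
    (fun y hy => hdiff t ht y ⟨by linarith [hx.1, hy.1], by linarith [hx.2, hy.2]⟩)
    (fun y hy => hC t ht y ⟨by linarith [hx.1, hy.1], by linarith [hx.2, hy.2]⟩ (by
      rcases hbdry with h0 | rfl | rfl
      · exact Or.inl h0
      · exact Or.inr (Or.inl hy.2)
      · exact Or.inr (Or.inr hy.1)))
  rwa [add_sub_cancel_left] at hstep

theorem ux_le_of_boundary (hpde : SolvesB u (-1) 1 T)
    (hcu : ContinuousOn (fun p : ℝ × ℝ => u p.1 p.2) (Icc (-1) 1 ×ˢ Icc 0 T))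
    (hcw : ContinuousOn (fun p : ℝ × ℝ => ux u p.1 p.2) (Icc (-1) 1 ×ˢ Icc 0 T))
    (hdiff0 : ∀ x ∈ Ioo (-1 : ℝ) 1, DifferentiableAt ℝ (fun y => u y 0) x) {B : ℝ}
    (hB0 : ∀ x ∈ Ioo (-1 : ℝ) 1, ux u x 0 ≤ B)
    (hBl : ∀ t ∈ Ioc 0 T, ux u (-1) t ≤ B) (hBr : ∀ t ∈ Ioc 0 T, ux u 1 t ≤ B) :
    ∀ x ∈ Icc (-1 : ℝ) 1, ∀ t ∈ Icc 0 T, ux u x t ≤ B := by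
  have hdiff : ∀ t ∈ Icc 0 T, ∀ x ∈ Ioo (-1 : ℝ) 1, DifferentiableAt ℝ (fun y => u y t) x := by
    intro t ht x hx
    rcases ht.1.eq_or_lt with rfl | ht0
    · exact hdiff0 x hx
    · exact (hpde t ⟨ht0, ht.2⟩ x hx).1
  intro x hx t ht
  refine ContinuousOn.le_of_forall_Ioo_le (by norm_num) (hcw.uncurry_right (f := ux u) t ht)
    (fun y hy => ?_) x hx
  refine le_of_forall_pos_le_add fun η hη => ?_
  obtain ⟨δ, hδ, hnear⟩ := exists_ux_le_add_near_boundary hcw hη hB0 hBl hBr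
  refine (hdiff t ht y hy).hasDerivAt.le_of_eventually_sub_le ?_
  filter_upwards [Ioo_mem_nhdsGT (lt_min hδ (sub_pos.2 hy.2))] with h hh
  refine hpde.shift_sub_le hcu hdiff hh.1 (fun s hs z hz hbdry => hnear s hs z hz ?_)
    y ⟨hy.1.le, by linarith [hh.2.trans_le (min_le_right _ _)]⟩ t ht
  have := hh.2.trans_le (min_le_left _ _)
  rcases hbdry with h0 | hl | hr
  exacts [Or.inl h0, Or.inr (Or.inl (by linarith)), Or.inr (Or.inr (by linarith))]

end SolvesB

theorem ContDiffOn.abs_derivWithin_le_sSup {f : ℝ → ℝ} {a b : ℝ} (hab : a < b)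
    (hf : ContDiffOn ℝ 1 f (Icc a b)) {x : ℝ} (hx : x ∈ Icc a b) :
    |derivWithin f (Icc a b) x| ≤ sSup ((fun y => |derivWithin f (Icc a b) y|) '' Icc a b) :=
  le_csSup (isCompact_Icc.image_of_continuousOn
    (hf.continuousOn_derivWithin (uniqueDiffOn_Icc hab) le_rfl).abs).bddAbove
    (mem_image_of_mem _ hx)

namespace IsClassicalSolB

variable {u : ℝ → ℝ → ℝ} {u0 : ℝ → ℝ} {T : ℝ}

theorem neg (hu : IsClassicalSolB u u0 T) :
    IsClassicalSolB (fun x t => -u x t) (fun x => -u0 x) T := by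
  obtain ⟨hcu, hcw, hpde, hbc, hic⟩ := hu
  refine ⟨hcu.neg, ?_, SolvesB.neg hpde, fun t ht => ?_, fun x hx => congrArg Neg.neg (hic x hx)⟩
  · simpa only [ux_neg] using hcw.fun_neg
  · simp only [ux_neg, (hbc t ht).1, (hbc t ht).2, and_self]

theorem hasDerivAt_initial (hu : IsClassicalSolB u u0 T)
    (hu0 : ContDiffOn ℝ 1 u0 (Icc (-1) 1)) {x : ℝ} (hx : x ∈ Ioo (-1 : ℝ) 1) :
    HasDerivAt (fun y => u y 0) (derivWithin u0 (Icc (-1) 1) x) x := by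
  have hnhds : Icc (-1 : ℝ) 1 ∈ 𝓝 x := Icc_mem_nhds hx.1 hx.2
  rw [derivWithin_of_mem_nhds hnhds]
  exact (((hu0.differentiableOn one_ne_zero) x (Ioo_subset_Icc_self hx)).differentiableAt
    hnhds).hasDerivAt.congr_of_eventuallyEq (eventually_of_mem hnhds hu.2.2.2.2)

theorem ux_le (hu : IsClassicalSolB u u0 T) (hu0 : ContDiffOn ℝ 1 u0 (Icc (-1) 1)) {K : ℝ}
    (hK : ∀ x ∈ Icc (-1 : ℝ) 1, ∀ t ∈ Icc 0 T, |u x t| ≤ K) :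
    ∀ x ∈ Icc (-1 : ℝ) 1, ∀ t ∈ Icc 0 T,
      ux u x t ≤ max (sSup ((fun y => |derivWithin u0 (Icc (-1) 1) y|) '' Icc (-1) 1)) K := by
  refine SolvesB.ux_le_of_boundary hu.2.2.1 hu.1 hu.2.1
    (fun x hx => (hu.hasDerivAt_initial hu0 hx).differentiableAt) (fun x hx => ?_)
    (fun t ht => ?_) (fun t ht => ?_)
  · rw [ux, (hu.hasDerivAt_initial hu0 hx).deriv]
    exact (le_abs_self _).trans ((hu0.abs_derivWithin_le_sSup (by norm_num)
      (Ioo_subset_Icc_self hx)).trans (le_max_left _ _))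
  · rw [(hu.2.2.2.1 t ht).2]
    exact (neg_le_abs _).trans
      ((hK (-1) (by norm_num) t (Ioc_subset_Icc_self ht)).trans (le_max_right _ _))
  · rw [(hu.2.2.2.1 t ht).1]
    exact (le_abs_self _).trans
      ((hK 1 (by norm_num) t (Ioc_subset_Icc_self ht)).trans (le_max_right _ _))

end IsClassicalSolB

theorem stmt_7_general (T K : ℝ) (u0 : ℝ → ℝ)
    (hu0 : ContDiffOn ℝ 1 u0 (Set.Icc (-1 : ℝ) 1))
    (u : ℝ → ℝ → ℝ) (hu : IsClassicalSolB u u0 T)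
    (hK : ∀ x ∈ Set.Icc (-1 : ℝ) 1, ∀ t ∈ Set.Icc (0 : ℝ) T, |u x t| ≤ K) :
    ∀ x ∈ Set.Icc (-1 : ℝ) 1, ∀ t ∈ Set.Icc (0 : ℝ) T,
      |ux u x t| ≤
        max (sSup ((fun y => |derivWithin u0 (Set.Icc (-1 : ℝ) 1) y|) ''
          Set.Icc (-1 : ℝ) 1)) K := by
  intro x hx t ht
  have hupper := hu.ux_le hu0 hK x hx t ht
  have hlower := hu.neg.ux_le hu0.neg
    (fun y hy s hs => (abs_neg (u y s)).trans_le (hK y hy s hs)) x hx t ht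
  simp only [ux_neg, derivWithin.fun_neg, abs_neg] at hlower
  exact abs_le.2 ⟨by linarith, hupper⟩

/-- gradient estimate. If `u` is a classical solution of (B) on
`[-1,1] × [0,T]` with `u0 ∈ C¹([-1,1])` and `|u| ≤ K`, then
`|u_x| ≤ max{ sup_{[-1,1]} |u0'|, K }` on `[-1,1] × [0,T]`. -/
theorem stmt_7 (T K : ℝ) (hT : 0 < T) (u0 : ℝ → ℝ)
    (hu0 : ContDiffOn ℝ 1 u0 (Set.Icc (-1 : ℝ) 1))
    (u : ℝ → ℝ → ℝ) (hu : IsClassicalSolB u u0 T)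
    (hK : ∀ x ∈ Set.Icc (-1 : ℝ) 1, ∀ t ∈ Set.Icc (0 : ℝ) T, |u x t| ≤ K) :
    ∀ x ∈ Set.Icc (-1 : ℝ) 1, ∀ t ∈ Set.Icc (0 : ℝ) T,
      |ux u x t| ≤
        max (sSup ((fun y => |derivWithin u0 (Set.Icc (-1 : ℝ) 1) y|) ''
          Set.Icc (-1 : ℝ) 1)) K :=
  stmt_7_general T K u0 hu0 u hu hK
end

section
/- Let T > 0, M0 > 0 and h > 0 satisfy h > φ(1;h) + (π/2)·T + M0, where φ(x;h) := -(1/arctan h)·ln(cos((arctan h)·x)). Then ū(x,t) := φ(x;h) + (arctan h)·t + M0 is an upper solution of problem (B) on the time interval [0,T]: it satisfies the equation u_t = u_xx/(1+u_x^2) with equality, and for t ∈ [0,T] it satisfies ū_x(1,t) = h ≥ ū(1,t) and ū_x(-1,t) = -h ≤ -ū(-1,t). -/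
open Real

/-- if `h > φ(1;h) + (π/2)T + M0`, with
`φ(x;h) = -(1/arctan h)·ln(cos((arctan h)x))`, then
`ū(x,t) = φ(x;h) + (arctan h)t + M0` is an upper solution of (B) on `[0,T]`:
it satisfies the equation `u_t = u_xx/(1+u_x²)` with equality, and for
`t ∈ [0,T]`, `ū_x(1,t) = h ≥ ū(1,t)` and `ū_x(-1,t) = -h ≤ -ū(-1,t)`. -/
theorem stmt_19 (T M0 h : ℝ) (hT : 0 < T) (hM0 : 0 < M0) (hh : 0 < h)
    (φ : ℝ → ℝ)
    (hφ : ∀ x : ℝ, φ x = -(1 / Real.arctan h) * Real.log (Real.cos (Real.arctan h * x)))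
    (hbig : h > φ 1 + (π / 2) * T + M0)
    (ubar : ℝ → ℝ → ℝ)
    (hubar : ∀ x t : ℝ, ubar x t = φ x + Real.arctan h * t + M0) :
    (∀ t ∈ Set.Icc (0 : ℝ) T, ∀ x ∈ Set.Icc (-1 : ℝ) 1,
        DifferentiableAt ℝ (fun y => ubar y t) x ∧
        DifferentiableAt ℝ (fun y => ux ubar y t) x ∧
        DifferentiableAt ℝ (fun s => ubar x s) t ∧
        ut ubar x t = uxx ubar x t / (1 + ux ubar x t ^ 2)) ∧
    (∀ t ∈ Set.Icc (0 : ℝ) T,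
        ux ubar 1 t = h ∧ ubar 1 t ≤ h ∧
        ux ubar (-1) t = -h ∧ -h ≤ -(ubar (-1) t)) := by
  set a := Real.arctan h with ha_def
  have ha0 : 0 < a := by
    rw [ha_def, ← Real.arctan_zero]; exact Real.arctan_strictMono hh
  have ha2 : a < π / 2 := Real.arctan_lt_pi_div_two h
  have ha0' : a ≠ 0 := ne_of_gt ha0
  -- open set where everything is nice
  set S : Set ℝ := {y : ℝ | a * y ∈ Set.Ioo (-(π/2)) (π/2)} with hS_def
  have hSopen : IsOpen S := (isOpen_Ioo).preimage (continuous_const.mul continuous_id)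
  have hmem : ∀ x ∈ Set.Icc (-1 : ℝ) 1, x ∈ S := by
    intro x hx
    have h1 : |a * x| < π / 2 := by
      rw [abs_mul, abs_of_pos ha0]
      calc a * |x| ≤ a * 1 := by
            exact mul_le_mul_of_nonneg_left (abs_le.mpr ⟨hx.1, hx.2⟩) ha0.le
        _ = a := mul_one a
        _ < π / 2 := ha2
    exact Set.mem_Ioo.mpr (abs_lt.mp h1)
  have hcos : ∀ y ∈ S, 0 < Real.cos (a * y) := by
    intro y hy
    exact Real.cos_pos_of_mem_Ioo hy
  -- derivative of φ
  have hφ' : ∀ y ∈ S, HasDerivAt φ (Real.tan (a * y)) y := by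
    intro y hy
    have hcy := hcos y hy
    have hlin : HasDerivAt (fun z : ℝ => a * z) a y := by
      simpa using (hasDerivAt_id y).const_mul a
    have hc : HasDerivAt (fun z : ℝ => Real.cos (a * z)) (-Real.sin (a * y) * a) y :=
      (Real.hasDerivAt_cos (a * y)).comp y hlin
    have hl : HasDerivAt (fun z : ℝ => Real.log (Real.cos (a * z)))
        ((-Real.sin (a * y) * a) / Real.cos (a * y)) y := hc.log (ne_of_gt hcy)
    have := hl.const_mul (-(1 / a))
    have heq : -(1/a) * ((-Real.sin (a * y) * a) / Real.cos (a * y)) = Real.tan (a * y) := by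
      rw [Real.tan_eq_sin_div_cos]
      field_simp
    have h2 : HasDerivAt (fun z : ℝ => -(1/a) * Real.log (Real.cos (a * z)))
        (Real.tan (a * y)) y := heq ▸ this
    have hfun : φ = fun z : ℝ => -(1/a) * Real.log (Real.cos (a * z)) := funext hφ
    rw [hfun]
    exact h2
  -- derivative of ubar in x
  have hux : ∀ t : ℝ, ∀ y ∈ S, HasDerivAt (fun z => ubar z t) (Real.tan (a * y)) y := by
    intro t y hy
    have hfun : (fun z => ubar z t) = fun z => φ z + (a * t + M0) := by
      funext z; rw [hubar]; ring
    rw [hfun]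
    simpa using (hφ' y hy).add_const (a * t + M0)
  have huxval : ∀ t : ℝ, ∀ y ∈ S, ux ubar y t = Real.tan (a * y) := by
    intro t y hy
    exact (hux t y hy).deriv
  -- second x-derivative
  have huxx : ∀ t : ℝ, ∀ x ∈ S, HasDerivAt (fun y => ux ubar y t)
      (1 / Real.cos (a * x) ^ 2 * a) x := by
    intro t x hx
    have hlin : HasDerivAt (fun z : ℝ => a * z) a x := by
      simpa using (hasDerivAt_id x).const_mul a
    have htan : HasDerivAt (fun z : ℝ => Real.tan (a * z))
        (1 / Real.cos (a * x) ^ 2 * a) x :=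
      (Real.hasDerivAt_tan (ne_of_gt (hcos x hx))).comp x hlin
    apply htan.congr_of_eventuallyEq
    filter_upwards [hSopen.mem_nhds hx] with y hy
    exact huxval t y hy
  -- time derivative
  have hut : ∀ x t : ℝ, HasDerivAt (fun s => ubar x s) a t := by
    intro x t
    have hfun : (fun s => ubar x s) = fun s => a * s + (φ x + M0) := by
      funext s; rw [hubar]; ring
    rw [hfun]
    have : HasDerivAt (fun s : ℝ => a * s) a t := by
      simpa using (hasDerivAt_id t).const_mul a
    simpa using this.add_const (φ x + M0)
  constructor
  · intro t ht x hx
    have hxS := hmem x hx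
    have hcx := hcos x hxS
    refine ⟨(hux t x hxS).differentiableAt, (huxx t x hxS).differentiableAt,
      (hut x t).differentiableAt, ?_⟩
    have h1 : ut ubar x t = a := (hut x t).deriv
    have h2 : uxx ubar x t = 1 / Real.cos (a * x) ^ 2 * a := (huxx t x hxS).deriv
    have h3 : ux ubar x t = Real.tan (a * x) := huxval t x hxS
    rw [h1, h2, h3]
    have htansq : (1 + Real.tan (a * x) ^ 2)⁻¹ = Real.cos (a * x) ^ 2 :=
      Real.inv_one_add_tan_sq hcx.ne'
    have hne : (1 : ℝ) + Real.tan (a * x) ^ 2 ≠ 0 := by positivity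
    have hc2 : Real.cos (a * x) ^ 2 ≠ 0 := pow_ne_zero 2 (ne_of_gt hcx)
    rw [show (1 : ℝ) + Real.tan (a * x) ^ 2 = 1 / Real.cos (a * x) ^ 2 by
      rw [eq_div_iff hc2, ← htansq, mul_inv_cancel₀ hne]]
    field_simp
  · intro t ht
    have h1S : (1 : ℝ) ∈ S := hmem 1 ⟨by norm_num, le_refl 1⟩
    have hm1S : (-1 : ℝ) ∈ S := hmem (-1) ⟨le_refl (-1), by norm_num⟩
    have hth : Real.tan a = h := Real.tan_arctan h
    have hφeven : φ (-1) = φ 1 := by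
      rw [hφ, hφ]
      norm_num
    have hbnd : ∀ y : ℝ, φ y + a * t + M0 = φ y + a * t + M0 := fun _ => rfl
    have hatT : a * t ≤ (π / 2) * T := by
      calc a * t ≤ (π/2) * t := mul_le_mul_of_nonneg_right ha2.le ht.1
        _ ≤ (π/2) * T := mul_le_mul_of_nonneg_left ht.2 (by positivity)
    refine ⟨?_, ?_, ?_, ?_⟩
    · rw [huxval t 1 h1S, mul_one, hth]
    · rw [hubar]
      linarith
    · rw [huxval t (-1) hm1S]
      rw [mul_neg_one, Real.tan_neg, hth]
    · rw [hubar, hφeven]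
      linarith
end
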